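/- arXiv:1805.05801 — 4 statements merged into one kernel-verified Lean document; each statement's English description precedes it below -/
import Mathlib

section
/- The squared Fischer-Burmeister merit function Ψ_FB(a,b) = (√(a² + b²) − (a + b))² is continuously differentiable on all of ℝ², including at the origin. -/
/-!
Expanding the square, with `u = (a, b)` in the Euclidean plane and `ℓ u = a + b`,
`Ψ_FB(u) = ‖u‖² - 2 ℓ (‖u‖ • u) + (ℓ u)²`, so everything reduces to `u ↦ ‖u‖ • u` being `C¹`.
Away from the origin this map is smooth, and since the norm is `1`-Lipschitz its derivative
has norm at most `2 ‖u‖`; hence the derivative tends to `0`, which is its derivative at the origin.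
-/

open Asymptotics Topology

section NormedSpace

variable {E : Type*} [NormedAddCommGroup E] [NormedSpace ℝ E]

theorem hasFDerivAt_norm_smul_self_zero :
    HasFDerivAt (fun x : E ↦ ‖x‖ • x) (0 : E →L[ℝ] E) 0 := by
  refine .of_isLittleO ?_
  simp only [norm_zero, zero_smul, sub_zero, zero_apply]
  have hnorm : (fun x : E ↦ ‖x‖) =o[𝓝 0] fun _ ↦ (1 : ℝ) :=
    (isLittleO_one_iff ℝ).2 (by simpa using (continuous_norm (E := E)).tendsto 0)
  simpa using hnorm.smul_isBigO (isBigO_refl (fun x : E ↦ x) _)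

theorem norm_fderiv_norm_smul_self_le {x : E} (hx : DifferentiableAt ℝ (‖·‖) x) :
    ‖fderiv ℝ (fun y : E ↦ ‖y‖ • y) x‖ ≤ 2 * ‖x‖ := by
  rw [fderiv_fun_smul (f := fun y ↦ y) hx differentiableAt_fun_id, fderiv_fun_id]
  have hnorm : ‖fderiv ℝ (‖·‖) x‖ ≤ 1 := by
    simpa using norm_fderiv_le_of_lipschitz ℝ (x₀ := x) lipschitzWith_one_norm
  calc _ ≤ ‖‖x‖ • ContinuousLinearMap.id ℝ E‖ + ‖(fderiv ℝ (‖·‖) x).smulRight x‖ :=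
        norm_add_le _ _
    _ ≤ ‖x‖ * 1 + 1 * ‖x‖ := by
        rw [norm_smul, norm_norm, ContinuousLinearMap.norm_smulRight_apply]
        gcongr
        exact ContinuousLinearMap.norm_id_le
    _ = 2 * ‖x‖ := by ring

end NormedSpace

section InnerProductSpace

variable {E : Type*} [NormedAddCommGroup E] [InnerProductSpace ℝ E]

theorem contDiff_norm_smul_self : ContDiff ℝ 1 (fun x : E ↦ ‖x‖ • x) := by
  have hsmooth : ∀ x ≠ 0, ContDiffAt ℝ 1 (fun y : E ↦ ‖y‖ • y) x :=
    fun x hx ↦ (contDiffAt_norm ℝ hx).smul contDiffAt_id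
  have hbound (x : E) : ‖fderiv ℝ (fun y : E ↦ ‖y‖ • y) x‖ ≤ 2 * ‖x‖ := by
    rcases eq_or_ne x 0 with rfl | hx
    · simp [hasFDerivAt_norm_smul_self_zero.fderiv]
    · exact norm_fderiv_norm_smul_self_le ((contDiffAt_norm ℝ hx).differentiableAt one_ne_zero)
  rw [contDiff_one_iff_fderiv]
  refine ⟨fun x ↦ ?_, continuous_iff_continuousAt.2 fun x ↦ ?_⟩ <;>
    rcases eq_or_ne x 0 with rfl | hx
  · exact hasFDerivAt_norm_smul_self_zero.differentiableAt
  · exact (hsmooth x hx).differentiableAt one_ne_zero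
  · rw [ContinuousAt, hasFDerivAt_norm_smul_self_zero.fderiv, tendsto_zero_iff_norm_tendsto_zero]
    refine squeeze_zero (fun _ ↦ norm_nonneg _) hbound ?_
    simpa using (by fun_prop : Continuous fun t : E ↦ 2 * ‖t‖).tendsto 0
  · exact (hsmooth x hx).continuousAt_fderiv one_ne_zero

theorem contDiff_sq_norm_sub_dual (ℓ : StrongDual ℝ E) :
    ContDiff ℝ 1 (fun x : E ↦ (‖x‖ - ℓ x) ^ 2) := by
  have hexpand : (fun x : E ↦ (‖x‖ - ℓ x) ^ 2) =
      fun x ↦ ‖x‖ ^ 2 - 2 * ℓ (‖x‖ • x) + ℓ x ^ 2 := by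
    funext x
    rw [map_smul, smul_eq_mul]
    ring
  rw [hexpand]
  exact ((contDiff_norm_sq ℝ).sub
    (contDiff_const.mul (ℓ.contDiff.comp contDiff_norm_smul_self))).add (ℓ.contDiff.pow 2)

end InnerProductSpace

theorem FB_merit_function_C1 :
    ContDiff ℝ 1 (fun p : ℝ × ℝ =>
      (Real.sqrt (p.1 ^ 2 + p.2 ^ 2) - (p.1 + p.2)) ^ 2) := by
  -- `ℝ × ℝ` carries the sup norm; `WithLp 2 (ℝ × ℝ)` is the same plane with the Euclidean norm.
  let ℓ : StrongDual ℝ (WithLp 2 (ℝ × ℝ)) := WithLp.fstL 2 ℝ ℝ ℝ + WithLp.sndL 2 ℝ ℝ ℝ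
  have hL2 : (fun p : ℝ × ℝ => (Real.sqrt (p.1 ^ 2 + p.2 ^ 2) - (p.1 + p.2)) ^ 2) =
      (fun u ↦ (‖u‖ - ℓ u) ^ 2) ∘ WithLp.toLp 2 := by
    funext p
    simp [ℓ, WithLp.prod_norm_eq_of_L2]
  rw [hL2]
  exact (contDiff_sq_norm_sub_dual ℓ).comp
    (WithLp.prodContinuousLinearEquiv 2 ℝ ℝ ℝ).symm.contDiff
end

section
/- For every τ > 0 and all a, b ∈ ℝ, the smooth Fischer-Burmeister function satisfies G_FB(a,b,τ) = 0 if and only if a > 0, b > 0, and a·b = τ. -/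
/-! The equation `√(a² + b² + 2τ) = a + b` says exactly that `a + b ≥ 0` and, after squaring,
that `a b = τ`. Since `τ > 0`, the numbers `a` and `b` then have the same sign, and `a + b ≥ 0`
forces both to be positive. -/

theorem Real.sqrt_eq_iff_of_nonneg {x y : ℝ} (hx : 0 ≤ x) : √x = y ↔ y * y = x ∧ 0 ≤ y := by
  rw [Real.sqrt_eq_cases]
  exact or_iff_left fun h => (not_lt.mpr hx) h.1

theorem add_mul_self_eq_iff_mul_eq {R : Type*} [CommRing R] [IsDomain R] [CharZero R]
    (a b c : R) : (a + b) * (a + b) = a ^ 2 + b ^ 2 + 2 * c ↔ a * b = c := by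
  rw [show (a + b) * (a + b) = a ^ 2 + b ^ 2 + 2 * (a * b) by ring, add_right_inj,
    mul_right_inj' two_ne_zero]

theorem add_nonneg_iff_of_mul_pos {R : Type*} [Ring R] [LinearOrder R] [IsStrictOrderedRing R]
    {a b : R} (hab : 0 < a * b) : 0 ≤ a + b ↔ 0 < a ∧ 0 < b := by
  refine ⟨fun hsum => ?_, fun ⟨ha, hb⟩ => add_nonneg ha.le hb.le⟩
  rcases pos_and_pos_or_neg_and_neg_of_mul_pos hab with hpos | ⟨ha, hb⟩
  · exact hpos
  · exact absurd hsum (not_le.mpr (add_neg ha hb))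

theorem smooth_FB_zero_iff (τ : ℝ) (hτ : 0 < τ) (a b : ℝ) :
    Real.sqrt (a ^ 2 + b ^ 2 + 2 * τ) - (a + b) = 0 ↔
      0 < a ∧ 0 < b ∧ a * b = τ := by
  rw [sub_eq_zero, Real.sqrt_eq_iff_of_nonneg (by positivity), add_mul_self_eq_iff_mul_eq]
  constructor
  · rintro ⟨hab, hsum⟩
    obtain ⟨ha, hb⟩ := (add_nonneg_iff_of_mul_pos (hab ▸ hτ)).mp hsum
    exact ⟨ha, hb, hab⟩
  · rintro ⟨ha, hb, hab⟩
    exact ⟨hab, add_nonneg ha.le hb.le⟩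
end

section
/- For τ > 0, the function G_FB(·,·,τ) is strictly decreasing in each argument: if a₁ < a₂ then G_FB(a₂,b,τ) < G_FB(a₁,b,τ) for every b ∈ ℝ. -/
/-! The partial map `a ↦ √(a² + c) - a` with `c = b² + 2τ > 0` is strictly decreasing: rationalising,
`√(a₂² + c) - √(a₁² + c) = (a₂ - a₁)(a₁ + a₂) / (√(a₁² + c) + √(a₂² + c))`, and `a₁ + a₂` is strictly
smaller than the denominator because `|a| < √(a² + c)`. -/

namespace Real

lemma abs_lt_sqrt_sq_add {c : ℝ} (hc : 0 < c) (a : ℝ) : |a| < √(a ^ 2 + c) := by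
  rw [← sqrt_sq_eq_abs]
  exact sqrt_lt_sqrt (sq_nonneg a) (by linarith)

lemma sqrt_sq_add_sub_sqrt_sq_add_lt {c : ℝ} (hc : 0 < c) {a₁ a₂ : ℝ} (h : a₁ < a₂) :
    √(a₂ ^ 2 + c) - √(a₁ ^ 2 + c) < a₂ - a₁ := by
  set s₁ := √(a₁ ^ 2 + c)
  set s₂ := √(a₂ ^ 2 + c)
  have hs₁ : s₁ ^ 2 = a₁ ^ 2 + c := sq_sqrt (by positivity)
  have hs₂ : s₂ ^ 2 = a₂ ^ 2 + c := sq_sqrt (by positivity)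
  have hsum : a₁ + a₂ < s₁ + s₂ := add_lt_add
    ((le_abs_self a₁).trans_lt (abs_lt_sqrt_sq_add hc a₁))
    ((le_abs_self a₂).trans_lt (abs_lt_sqrt_sq_add hc a₂))
  have hlt : (s₂ - s₁) * (s₁ + s₂) < (a₂ - a₁) * (s₁ + s₂) :=
    calc (s₂ - s₁) * (s₁ + s₂) = (a₂ - a₁) * (a₁ + a₂) := by linear_combination hs₂ - hs₁
      _ < (a₂ - a₁) * (s₁ + s₂) := mul_lt_mul_of_pos_left hsum (sub_pos.mpr h)
  exact lt_of_mul_lt_mul_right hlt (add_nonneg (sqrt_nonneg _) (sqrt_nonneg _))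

lemma strictAnti_sqrt_sq_add_sub {c : ℝ} (hc : 0 < c) : StrictAnti fun a : ℝ ↦ √(a ^ 2 + c) - a :=
  fun _ _ h ↦ by
    have := sqrt_sq_add_sub_sqrt_sq_add_lt hc h
    dsimp only
    linarith

end Real

theorem smooth_FB_strict_anti (τ : ℝ) (hτ : 0 < τ) (b a₁ a₂ : ℝ) (h : a₁ < a₂) :
    Real.sqrt (a₂ ^ 2 + b ^ 2 + 2 * τ) - (a₂ + b) <
      Real.sqrt (a₁ ^ 2 + b ^ 2 + 2 * τ) - (a₁ + b) := by
  have := Real.strictAnti_sqrt_sq_add_sub (c := b ^ 2 + 2 * τ) (by positivity) h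
  simp only [← add_assoc] at this
  linarith
end

section
/- For all a, b ∈ ℝ, |Φ_FB(a,b)| and |min(a,b)| are equivalent in the sense that (2 − √2)·|min(a,b)| ≤ |Φ_FB(a,b)| ≤ (2 + √2)·|min(a,b)|, where Φ_FB is the Fischer-Burmeister function. -/
private lemma le_sqrt_of_sq_le' {x y : ℝ} (h : x ^ 2 ≤ y) : x ≤ Real.sqrt y := by
  calc x ≤ |x| := le_abs_self x
    _ = Real.sqrt (x ^ 2) := (Real.sqrt_sq_eq_abs x).symm
    _ ≤ Real.sqrt y := Real.sqrt_le_sqrt h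

private lemma sqrt_le_of_sq_le' {x y : ℝ} (hx : 0 ≤ x) (h : y ≤ x ^ 2) :
    Real.sqrt y ≤ x := by
  calc Real.sqrt y ≤ Real.sqrt (x ^ 2) := Real.sqrt_le_sqrt h
    _ = |x| := Real.sqrt_sq_eq_abs x
    _ = x := abs_of_nonneg hx

private lemma FB_aux (a b : ℝ) (hab : a ≤ b) :
    (2 - Real.sqrt 2) * |a| ≤ |Real.sqrt (a ^ 2 + b ^ 2) - (a + b)| ∧
    |Real.sqrt (a ^ 2 + b ^ 2) - (a + b)| ≤ (2 + Real.sqrt 2) * |a| := by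
  set s := Real.sqrt 2 with hs
  set r := Real.sqrt (a ^ 2 + b ^ 2) with hr
  have hs0 : 0 ≤ s := Real.sqrt_nonneg 2
  have hs2 : s ^ 2 = 2 := Real.sq_sqrt (by norm_num)
  have hs1 : 1 ≤ s := by nlinarith
  have hr0 : 0 ≤ r := Real.sqrt_nonneg _
  rcases le_or_gt 0 a with ha | ha
  · -- both nonnegative
    have hb : 0 ≤ b := ha.trans hab
    have hup : r ≤ a + b := sqrt_le_of_sq_le' (by linarith) (by nlinarith)
    have key : 0 ≤ (s - 1) * a * (b - a) :=
      mul_nonneg (mul_nonneg (by linarith) ha) (by linarith)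
    have key2 : 0 ≤ (1 + s) * a * (b - a) :=
      mul_nonneg (mul_nonneg (by linarith) ha) (by linarith)
    have h1 : r ≤ b + (s - 1) * a :=
      sqrt_le_of_sq_le' (by nlinarith) (by nlinarith [key])
    have h2 : b - (1 + s) * a ≤ r := le_sqrt_of_sq_le' (by nlinarith [key2])
    rw [abs_of_nonneg ha, abs_of_nonpos (by linarith)]
    constructor <;> nlinarith
  · -- a < 0
    have ha' : a ≤ 0 := ha.le
    have hrb : b ≤ r := le_sqrt_of_sq_le' (by nlinarith)
    have key : 0 ≤ (s - 1) * (-a) * (b - a) :=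
      mul_nonneg (mul_nonneg (by linarith) (by linarith)) (by linarith)
    have key2 : 0 ≤ (1 + s) * (-a) * (b - a) :=
      mul_nonneg (mul_nonneg (by linarith) (by linarith)) (by linarith)
    have h1 : b + (s - 1) * a ≤ r := le_sqrt_of_sq_le' (by nlinarith [key])
    have h2 : r ≤ b - (1 + s) * a :=
      sqrt_le_of_sq_le' (by nlinarith) (by nlinarith [key2])
    rw [abs_of_nonpos ha', abs_of_nonneg (by linarith)]
    constructor <;> nlinarith

theorem FB_min_equivalence (a b : ℝ) :
    (2 - Real.sqrt 2) * |min a b| ≤ |Real.sqrt (a ^ 2 + b ^ 2) - (a + b)| ∧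
    |Real.sqrt (a ^ 2 + b ^ 2) - (a + b)| ≤ (2 + Real.sqrt 2) * |min a b| := by
  rcases le_total a b with h | h
  · rw [min_eq_left h]
    exact FB_aux a b h
  · rw [min_eq_right h]
    have h2 := FB_aux b a h
    rwa [add_comm (b ^ 2) (a ^ 2), add_comm b a] at h2
end
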